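/- Suppose there exists a positive integer m such that [x,y]^m = 1 for all x, y ∈ G. Then every element z of the subgroup L₁₂ = ⁅L₁,L₂⁆ of the weak commutativity group χ(G) satisfies z^m = 1 (so the exponent of L₁₂ divides m). -/

import Mathlib

open Subgroup
open scoped commutatorElement

/-- The weak commutativity relations inside the free product `G ∗ G`. -/
def chiRel (G : Type*) [Group G] : Subgroup (Monoid.Coprod G G) :=
  Subgroup.normalClosure
    {x | ∃ g : G, x = Monoid.Coprod.inl g * Monoid.Coprod.inr g *
      (Monoid.Coprod.inl g)⁻¹ * (Monoid.Coprod.inr g)⁻¹}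

instance chiRel_normal (G : Type*) [Group G] : (chiRel G).Normal :=
  Subgroup.normalClosure_normal

/-- The weak commutativity group `χ(G)`. -/
def Chi (G : Type*) [Group G] : Type _ := Monoid.Coprod G G ⧸ chiRel G

instance (G : Type*) [Group G] : Group (Chi G) :=
  inferInstanceAs (Group (Monoid.Coprod G G ⧸ chiRel G))

/-- The canonical map `G → χ(G)`, `g ↦ g`. -/
def chiIota1 (G : Type*) [Group G] : G →* Chi G :=
  (QuotientGroup.mk' (chiRel G)).comp Monoid.Coprod.inl

/-- The canonical map `G → χ(G)`, `g ↦ g^φ`. -/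
def chiIota2 (G : Type*) [Group G] : G →* Chi G :=
  (QuotientGroup.mk' (chiRel G)).comp Monoid.Coprod.inr

/-- `G₁ ≤ χ(G)`. -/
def chiG1 (G : Type*) [Group G] : Subgroup (Chi G) := (chiIota1 G).range

/-- `G₂ = G^φ ≤ χ(G)`. -/
def chiG2 (G : Type*) [Group G] : Subgroup (Chi G) := (chiIota2 G).range

/-- `L = ⟨g⁻¹ g^φ : g ∈ G⟩`. -/
def chiL (G : Type*) [Group G] : Subgroup (Chi G) :=
  Subgroup.closure {x | ∃ g : G, x = (chiIota1 G g)⁻¹ * chiIota2 G g}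

/-- `D = ⁅G₁, G₂⁆`. -/
def chiD (G : Type*) [Group G] : Subgroup (Chi G) := ⁅chiG1 G, chiG2 G⁆

/-- `L₁ = ⁅L, G₁⁆`. -/
def chiL1 (G : Type*) [Group G] : Subgroup (Chi G) := ⁅chiL G, chiG1 G⁆

/-- `L₂ = ⁅L, G₂⁆`. -/
def chiL2 (G : Type*) [Group G] : Subgroup (Chi G) := ⁅chiL G, chiG2 G⁆

/-- `R = ⁅⁅G₁, L⁆, G₂⁆`. -/
def chiR (G : Type*) [Group G] : Subgroup (Chi G) := ⁅⁅chiG1 G, chiL G⁆, chiG2 G⁆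

/-- `L₁₂ = ⁅L₁, L₂⁆`. -/
def chiL12 (G : Type*) [Group G] : Subgroup (Chi G) := ⁅chiL1 G, chiL2 G⁆

/-!
Write `Z = D ∩ L`. Since `⁅x, y^φ⁆ = ⁅x^φ, y⁆`, conjugating `⁅x, y^φ⁆` by `a` or by `a^φ` gives the
same element, so `L` centralizes `D`; hence `Z` is abelian and centralized by `D L`, which contains
`(G')^φ`. The projection `ρ : χ(G) → G × G` has kernel inside `D`, maps `L₁` into `G × 1` and `L₂`
into `1 × G'`, so `L₂ ≤ D (G')^φ`. For `u ∈ L₁`, `w ↦ ⁅u, w⁆` is a homomorphism from `D (G')^φ`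
to `Z`: it kills `D`, and for a commutator `c` of `G`, `⁅u, c^φ⁆ ^ m = ⁅u, (c ^ m)^φ⁆ = 1`. So the
generators `⁅u, v⁆` of `L₁₂` lie in the `m`-torsion of the abelian group `Z`.
-/

namespace Subgroup

variable {K : Type*} [Group K]

def torsionBy (A : Subgroup K) [IsMulCommutative A] (m : ℕ) : Subgroup K where
  carrier := {z | z ∈ A ∧ z ^ m = 1}
  one_mem' := ⟨A.one_mem, one_pow m⟩
  mul_mem' := fun {a b} ⟨ha, ham⟩ ⟨hb, hbm⟩ => ⟨A.mul_mem ha hb, by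
    rw [Commute.mul_pow (setLike_mul_comm ha hb), ham, hbm, one_mul]⟩
  inv_mem' := fun ⟨ha, ham⟩ => ⟨A.inv_mem ha, by rw [inv_pow, ham, inv_one]⟩

/-- On these elements `w ↦ ⁅u, w⁆` is multiplicative, which is why they form a subgroup. -/
def centralizerCommutatorIn (u : K) (S : Subgroup K) : Subgroup K where
  carrier := {w | w ∈ centralizer S ∧ ⁅u, w⁆ ∈ S}
  one_mem' := ⟨one_mem _, by rw [commutatorElement_one_right]; exact one_mem S⟩
  mul_mem' := fun {v w} ⟨hv, huv⟩ ⟨hw, huw⟩ => ⟨(centralizer (S : Set K)).mul_mem hv hw, by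
    rw [commutatorElement_mul_right_eq_mul_conj, mul_assoc _ v, ← mem_centralizer_iff.mp hv _ huw,
      ← mul_assoc, mul_inv_cancel_right]
    exact mul_mem huv huw⟩
  inv_mem' := fun {w} ⟨hw, huw⟩ => ⟨(centralizer (S : Set K)).inv_mem hw, by
    rw [commutatorElement_inv_right, ← commutatorElement_inv, mul_assoc,
      mem_centralizer_iff.mp hw _ (inv_mem huw), inv_mul_cancel_left]
    exact inv_mem huw⟩

end Subgroup

theorem commutatorElement_pow_right_of_commute {K : Type*} [Group K] {u w : K}
    (h : Commute w ⁅u, w⁆) (n : ℕ) : ⁅u, w ^ n⁆ = ⁅u, w⁆ ^ n := by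
  induction n with
  | zero => simp
  | succ n ih =>
    rw [pow_succ', commutatorElement_mul_right_eq_mul_conj, ih, mul_assoc _ w,
      (h.pow_right n).eq, ← mul_assoc, mul_inv_cancel_right, pow_succ']

theorem commutatorElement_eq_of_commute {K : Type*} [Group K] {a b c d : K} (hac : Commute a c)
    (hbd : Commute b d) (h : Commute (a⁻¹ * b) (c⁻¹ * d)) : ⁅a, d⁆ = ⁅c, b⁆ :=
  calc ⁅a, d⁆ = a * c * (c⁻¹ * d * (a⁻¹ * b)) * (d * b)⁻¹ := by group
    _ = c * a * (a⁻¹ * b * (c⁻¹ * d)) * (b * d)⁻¹ := by rw [← h.eq, hac.eq, hbd.eq]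
    _ = ⁅c, b⁆ := by group

section Chi

variable (G : Type*) [Group G]

theorem chiIota1_commute_chiIota2 (g : G) : Commute (chiIota1 G g) (chiIota2 G g) := by
  have h : QuotientGroup.mk' (chiRel G) ⁅Monoid.Coprod.inl g, Monoid.Coprod.inr g⁆ = 1 :=
    (QuotientGroup.eq_one_iff _).mpr (subset_normalClosure ⟨g, commutatorElement_def _ _⟩)
  rw [map_commutatorElement] at h
  exact commutatorElement_eq_one_iff_commute.mp h

/-- The quotient map, typed into `Chi G` so that rewriting does not meet the unfolded quotient. -/
def chiMk : Monoid.Coprod G G →* Chi G := QuotientGroup.mk' (chiRel G)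

theorem chiG1_sup_chiG2 : chiG1 G ⊔ chiG2 G = ⊤ := by
  change ((chiMk G).comp Monoid.Coprod.inl).range ⊔ ((chiMk G).comp Monoid.Coprod.inr).range = ⊤
  rw [MonoidHom.range_comp, MonoidHom.range_comp, ← Subgroup.map_sup,
    Monoid.Coprod.range_inl_sup_range_inr, ← MonoidHom.range_eq_map, MonoidHom.range_eq_top]
  exact QuotientGroup.mk'_surjective _

theorem chi_normal_of_le_normalizer {H : Subgroup (Chi G)}
    (h₁ : chiG1 G ≤ normalizer (H : Set _)) (h₂ : chiG2 G ≤ normalizer (H : Set _)) : H.Normal :=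
  normalizer_eq_top_iff.mp (top_le_iff.mp (chiG1_sup_chiG2 G ▸ sup_le h₁ h₂))

instance chiD_normal : (chiD G).Normal :=
  chi_normal_of_le_normalizer G (normalizer_commutator_ge_left _ _)
    (normalizer_commutator_ge_right _ _)

theorem chiL_gen_mem (g : G) : (chiIota1 G g)⁻¹ * chiIota2 G g ∈ chiL G :=
  subset_closure ⟨g, rfl⟩

instance chiL_normal : (chiL G).Normal := by
  refine chi_normal_of_le_normalizer G (le_normalizer_closure_iff.mpr ?_)
    (le_normalizer_closure_iff.mpr ?_)
  · rintro _ ⟨b, rfl⟩ _ ⟨a, rfl⟩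
    have e : chiIota1 G b * ((chiIota1 G a)⁻¹ * chiIota2 G a) * (chiIota1 G b)⁻¹ =
        ((chiIota1 G (a * b⁻¹))⁻¹ * chiIota2 G (a * b⁻¹)) *
          ((chiIota1 G b⁻¹)⁻¹ * chiIota2 G b⁻¹)⁻¹ := by
      simp only [map_mul, map_inv]; group
    rw [e]
    exact mul_mem (chiL_gen_mem G _) (inv_mem (chiL_gen_mem G _))
  · rintro _ ⟨b, rfl⟩ _ ⟨a, rfl⟩
    have e : chiIota2 G b * ((chiIota1 G a)⁻¹ * chiIota2 G a) * (chiIota2 G b)⁻¹ =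
        ((chiIota1 G b⁻¹)⁻¹ * chiIota2 G b⁻¹)⁻¹ *
          ((chiIota1 G (a * b⁻¹))⁻¹ * chiIota2 G (a * b⁻¹)) := by
      simp only [map_mul, map_inv]; group
    rw [e]
    exact mul_mem (inv_mem (chiL_gen_mem G _)) (chiL_gen_mem G _)

def chiRho : Chi G →* G × G :=
  QuotientGroup.lift (chiRel G) Monoid.Coprod.toProd <| normalClosure_le_normal <| by
    rintro _ ⟨g, rfl⟩
    simp [MonoidHom.mem_ker]

@[simp] theorem chiRho_chiIota1 (g : G) : chiRho G (chiIota1 G g) = (g, 1) := rfl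

@[simp] theorem chiRho_chiIota2 (g : G) : chiRho G (chiIota2 G g) = (1, g) := rfl

theorem chi_hom_ext {M : Type*} [Monoid M] {f f' : Chi G →* M}
    (h₁ : f.comp (chiIota1 G) = f'.comp (chiIota1 G))
    (h₂ : f.comp (chiIota2 G) = f'.comp (chiIota2 G)) : f = f' :=
  QuotientGroup.monoidHom_ext _ (Monoid.Coprod.hom_ext h₁ h₂)

/-- Modulo `D` the two copies of `G` commute, so `χ(G) ⧸ D` is a quotient of `G × G`. -/
theorem ker_chiRho_le_chiD : (chiRho G).ker ≤ chiD G := by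
  let q := QuotientGroup.mk' (chiD G)
  have hcomm : ∀ x y, Commute (q.comp (chiIota1 G) x) (q.comp (chiIota2 G) y) := fun x y =>
    commutatorElement_eq_one_iff_commute.mp <| by
      rw [MonoidHom.comp_apply, MonoidHom.comp_apply, ← map_commutatorElement,
        QuotientGroup.mk'_apply, QuotientGroup.eq_one_iff]
      exact commutator_mem_commutator ⟨x, rfl⟩ ⟨y, rfl⟩
  have hsection : ((q.comp (chiIota1 G)).noncommCoprod _ hcomm).comp (chiRho G) = q :=
    chi_hom_ext G (by ext; simp) (by ext; simp)
  intro z hz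
  have hqz : q z = 1 := by
    rw [← hsection, MonoidHom.comp_apply, MonoidHom.mem_ker.mp hz, map_one]
  exact (QuotientGroup.eq_one_iff z).mp hqz

theorem commutator_chiIota1_chiIota2_eq_swap (x y : G) :
    ⁅chiIota1 G x, chiIota2 G y⁆ = ⁅chiIota2 G x, chiIota1 G y⁆ := by
  have h := chiIota1_commute_chiIota2 G (x⁻¹ * y)
  simp only [map_mul, map_inv] at h
  exact commutatorElement_eq_of_commute (chiIota1_commute_chiIota2 G x)
    (chiIota1_commute_chiIota2 G y) h

/-- Conjugating `⁅x, y^φ⁆` by `a` or by `a^φ` gives the same element. -/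
theorem chiL_gen_commute_chiD_gen (a x y : G) :
    Commute ((chiIota1 G a)⁻¹ * chiIota2 G a) ⁅chiIota1 G x, chiIota2 G y⁆ := by
  have conj (p x y : Chi G) : p * ⁅x, y⁆ * p⁻¹ = ⁅p * x, y⁆ * ⁅p, y⁆⁻¹ := by
    rw [commutatorElement_mul_left_eq_conj_mul]; group
  have h : chiIota2 G a * ⁅chiIota1 G x, chiIota2 G y⁆ * (chiIota2 G a)⁻¹ =
      chiIota1 G a * ⁅chiIota1 G x, chiIota2 G y⁆ * (chiIota1 G a)⁻¹ := by
    calc _ = chiIota2 G a * ⁅chiIota2 G x, chiIota1 G y⁆ * (chiIota2 G a)⁻¹ := by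
          rw [commutator_chiIota1_chiIota2_eq_swap]
      _ = ⁅chiIota2 G (a * x), chiIota1 G y⁆ * ⁅chiIota2 G a, chiIota1 G y⁆⁻¹ := by
          rw [conj, map_mul]
      _ = ⁅chiIota1 G (a * x), chiIota2 G y⁆ * ⁅chiIota1 G a, chiIota2 G y⁆⁻¹ := by
          rw [commutator_chiIota1_chiIota2_eq_swap, commutator_chiIota1_chiIota2_eq_swap]
      _ = _ := by rw [conj, map_mul]
  calc (chiIota1 G a)⁻¹ * chiIota2 G a * ⁅chiIota1 G x, chiIota2 G y⁆
      = (chiIota1 G a)⁻¹ * (chiIota2 G a * ⁅chiIota1 G x, chiIota2 G y⁆ * (chiIota2 G a)⁻¹) *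
          chiIota2 G a := by group
    _ = ⁅chiIota1 G x, chiIota2 G y⁆ * ((chiIota1 G a)⁻¹ * chiIota2 G a) := by rw [h]; group

theorem chiL_le_centralizer_chiD : chiL G ≤ centralizer (chiD G) := by
  rw [le_centralizer_iff, chiD, commutator_le]
  rintro _ ⟨x, rfl⟩ _ ⟨y, rfl⟩
  rw [chiL, centralizer_closure, mem_centralizer_iff]
  rintro _ ⟨a, rfl⟩
  exact (chiL_gen_commute_chiD_gen G a x y).eq

instance chiD_inf_chiL_isMulCommutative :
    IsMulCommutative (chiD G ⊓ chiL G : Subgroup (Chi G)) :=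
  le_centralizer_iff_isMulCommutative.mp fun _ hz =>
    centralizer_le (fun _ h => h.1) (chiL_le_centralizer_chiD G hz.2)

theorem chiD_sup_chiL_le_centralizer : chiD G ⊔ chiL G ≤ centralizer (chiD G ⊓ chiL G) :=
  sup_le (le_centralizer_iff.mp (inf_le_right.trans (chiL_le_centralizer_chiD G)))
    ((chiL_le_centralizer_chiD G).trans (centralizer_le fun _ h => h.1))

/-- Modulo `D ⊔ L` we have `g^φ ≡ g`, and `g` commutes with `h^φ`. -/
theorem map_chiIota2_commutator_le : (commutator G).map (chiIota2 G) ≤ chiD G ⊔ chiL G := by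
  rw [_root_.commutator_def, map_commutator, ← MonoidHom.range_eq_map, commutator_le]
  rintro _ ⟨a, rfl⟩ _ ⟨b, rfl⟩
  let q := QuotientGroup.mk' (chiD G ⊔ chiL G)
  have ha : q (chiIota1 G a) = q (chiIota2 G a) :=
    QuotientGroup.eq.mpr (mem_sup_right (chiL_gen_mem G a))
  rw [← QuotientGroup.eq_one_iff, ← QuotientGroup.mk'_apply, map_commutatorElement, ← ha,
    ← map_commutatorElement, QuotientGroup.mk'_apply, QuotientGroup.eq_one_iff]
  exact mem_sup_left (commutator_mem_commutator ⟨a, rfl⟩ ⟨b, rfl⟩)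

theorem comap_chiRho_bot_prod_le (H : Subgroup G) :
    ((⊥ : Subgroup G).prod H).comap (chiRho G) ≤ chiD G ⊔ H.map (chiIota2 G) := by
  intro v hv
  rw [mem_comap, mem_prod, mem_bot] at hv
  have hd : v * (chiIota2 G (chiRho G v).2)⁻¹ ∈ chiD G :=
    ker_chiRho_le_chiD G (by ext <;> simp [hv.1])
  simpa using mul_mem_sup hd (mem_map_of_mem (chiIota2 G) hv.2)

theorem chiL1_le_ker_snd_comp_chiRho : chiL1 G ≤ ((MonoidHom.snd G G).comp (chiRho G)).ker := by
  rw [chiL1, commutator_le]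
  rintro u - _ ⟨x, rfl⟩
  simp [commutatorElement_def]

theorem chiL2_le_comap_chiRho :
    chiL2 G ≤ ((⊥ : Subgroup G).prod (commutator G)).comap (chiRho G) := by
  rw [chiL2, commutator_le]
  rintro u - _ ⟨y, rfl⟩
  rw [mem_comap, map_commutatorElement, chiRho_chiIota2, mem_prod]
  exact ⟨by simp [commutatorElement_def],
    commutator_mem_commutator (mem_top (chiRho G u).2) (mem_top y)⟩

theorem commutator_mem_chiD_of_chiRho {u v : Chi G} (hu : (chiRho G u).2 = 1)
    (hv : (chiRho G v).1 = 1) : ⁅u, v⁆ ∈ chiD G :=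
  ker_chiRho_le_chiD G (by ext <;> simp [commutatorElement_def, hu, hv])

theorem chiL2_le_centralizerCommutatorIn {m : ℕ} (hG : ∀ x y : G, ⁅x, y⁆ ^ m = 1) {u : Chi G}
    (hu : u ∈ chiL1 G) : chiL2 G ≤ centralizerCommutatorIn u ((chiD G ⊓ chiL G).torsionBy m) := by
  have huL : u ∈ chiL G := commutator_le_left _ _ hu
  have hu2 : (chiRho G u).2 = 1 := chiL1_le_ker_snd_comp_chiRho G hu
  have hcent : chiD G ⊔ chiL G ≤ centralizer ((chiD G ⊓ chiL G).torsionBy m) :=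
    (chiD_sup_chiL_le_centralizer G).trans (centralizer_le fun _ h => h.1)
  refine (chiL2_le_comap_chiRho G).trans ((comap_chiRho_bot_prod_le G _).trans (sup_le ?_ ?_))
  · intro d hd
    refine ⟨hcent (mem_sup_left hd), ?_⟩
    rw [Commute.commutator_eq (mem_centralizer_iff.mp (chiL_le_centralizer_chiD G huL) d hd).symm]
    exact one_mem _
  · rw [map_le_iff_le_comap, _root_.commutator_def, commutator_le]
    rintro a - b -
    have hw : chiIota2 G ⁅a, b⁆ ∈ chiD G ⊔ chiL G := map_chiIota2_commutator_le G
      (mem_map_of_mem _ (commutator_mem_commutator (mem_top a) (mem_top b)))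
    have hZ : ⁅u, chiIota2 G ⁅a, b⁆⁆ ∈ chiD G ⊓ chiL G :=
      ⟨commutator_mem_chiD_of_chiRho G hu2 (by simp [commutatorElement_def]),
        commutator_le_left (chiL G) ⊤ (commutator_mem_commutator huL (mem_top _))⟩
    refine ⟨hcent hw, hZ, ?_⟩
    rw [← commutatorElement_pow_right_of_commute
      (mem_centralizer_iff.mp (chiD_sup_chiL_le_centralizer G hw) _ hZ).symm,
      ← map_pow, hG, map_one, commutatorElement_one_right]

theorem chiL12_le_torsionBy {m : ℕ} (hG : ∀ x y : G, ⁅x, y⁆ ^ m = 1) :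
    chiL12 G ≤ (chiD G ⊓ chiL G).torsionBy m :=
  commutator_le.mpr fun _ hu _ hv => (chiL2_le_centralizerCommutatorIn G hG hu hv).2

end Chi

theorem chiL12_exponent_of_commutators_general (G : Type*) [Group G] (m : ℕ)
    (hG : ∀ x y : G, ⁅x, y⁆ ^ m = 1) :
    ∀ z ∈ chiL12 G, z ^ m = 1 :=
  fun _ hz => (chiL12_le_torsionBy G hG hz).2

theorem chiL12_exponent_of_commutators (G : Type*) [Group G] (m : ℕ) (hm : 0 < m)
    (hG : ∀ x y : G, ⁅x, y⁆ ^ m = 1) :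
    ∀ z ∈ chiL12 G, z ^ m = 1 :=
  chiL12_exponent_of_commutators_general G m hG
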